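/- Let δ ∈ ℂ be non-resonant, i.e. δ ∉ {1/2, 1, 3/2, ..., k}. Then the recursion (-1)^{ℓ-p}( [ (ℓ-p)/2 ] + (1 - (-1)^{ℓ-p})(δ - ℓ/2) ) ϖ_i^s = ( [s₁/2] + (1-(-1)^{s₁})λ₁ ) ϖ_i^{s-1₁} + Σ_{j=2}^n (-1)^{s₁+...+s_{j-1}} ( [s_j/2] + (1-(-1)^{s_j})λ_j ) ϖ_i^{s-1_j}, for multi-indices i, s in ℕ^n with p = |i| ≤ ℓ = |s| ≤ 2k, together with prescribed values ϖ_i^i for |i| = |s|, admits a unique solution (ϖ_i^s). -/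

import Mathlib

noncomputable section
open scoped BigOperators

/-- Functions on the supercircle `S^{1|1}`: `F = f₀(x) + θ f₁(x)` is encoded
as the pair `(f₀, f₁)` of smooth-or-not complex valued functions on `ℝ`. -/
abbrev SuperFn : Type := (ℝ → ℂ) × (ℝ → ℂ)

namespace SuperFn

/-- Smoothness of a superfunction (componentwise). -/
def Smooth (F : SuperFn) : Prop := ContDiff ℝ (⊤ : ℕ∞) F.1 ∧ ContDiff ℝ (⊤ : ℕ∞) F.2

/-- Product of superfunctions: `(f₀+θf₁)(g₀+θg₁) = f₀g₀ + θ(f₀g₁+f₁g₀)` (θ²=0). -/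
def mul (F G : SuperFn) : SuperFn := (F.1 * G.1, F.1 * G.2 + F.2 * G.1)

instance : CommMonoid SuperFn where
  mul := mul
  one := ((1 : ℝ → ℂ), 0)
  mul_assoc a b c := by
    show mul (mul a b) c = mul a (mul b c)
    unfold mul; exact Prod.ext (by ring) (by ring)
  one_mul a := by
    show mul ((1 : ℝ → ℂ), 0) a = a
    unfold mul; exact Prod.ext (by simp) (by simp)
  mul_one a := by
    show mul a ((1 : ℝ → ℂ), 0) = a
    unfold mul; exact Prod.ext (by simp) (by simp)
  mul_comm a b := by
    show mul a b = mul b a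
    unfold mul; exact Prod.ext (by ring) (by ring)
  npow n x := @npowRec _ ⟨((1 : ℝ → ℂ), 0)⟩ ⟨mul⟩ n x
  npow_zero _ := rfl
  npow_succ _ _ := rfl

/-- The even derivative `∂ₓ`. -/
def dx (F : SuperFn) : SuperFn := (deriv F.1, deriv F.2)

/-- The odd derivative `∂_θ`. -/
def dth (F : SuperFn) : SuperFn := (F.2, 0)

/-- `D = ∂_θ + θ∂ₓ`. -/
def Dop (F : SuperFn) : SuperFn := (F.2, deriv F.1)

/-- `D̄ = ∂_θ - θ∂ₓ`. -/
def Dbar (F : SuperFn) : SuperFn := (F.2, -deriv F.1)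

/-- The odd coordinate `θ`. -/
def θf : SuperFn := (0, 1)

/-- The even coordinate `x`. -/
def xf : SuperFn := (fun t => (t : ℂ), 0)

/-- Numerical parity. -/
def pn (p : Bool) : ℕ := if p then 1 else 0

/-- `F` is homogeneous of parity `p` (`false` = even, `true` = odd). -/
def hasParity (p : Bool) (F : SuperFn) : Prop := if p then F.1 = 0 else F.2 = 0

/-- The super binomial coefficient `(j choose i)_s`. -/
def sbinom (j i : ℕ) : ℕ :=
  if i % 2 = 0 ∨ j % 2 = 1 then Nat.choose (j / 2) (i / 2) else 0

/-- The contact vector field `X_f = -f D̄² + (1/2) D(f) D̄` as operator on functions. -/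
def Xop (f G : SuperFn) : SuperFn := f * dx G + (1/2 : ℂ) • (Dop f * Dbar G)

/-- The action `𝔏^λ_{X_f}` on `λ`-densities. -/
def densL (l : ℂ) (f G : SuperFn) : SuperFn := Xop f G + l • (dx f * G)

/-- The contact bracket `{f,g}` of homogeneous contact Hamiltonians. -/
def cbr (p q : Bool) (f g : SuperFn) : SuperFn :=
  f * dx g - dx f * g + ((1/2 : ℂ) * (-1 : ℂ) ^ (pn p * (pn q + 1))) • (Dop f * Dop g)

/-- Generalized binomial coefficient `(ν choose q)`. -/
def cchoose (ν : ℂ) (q : ℕ) : ℂ := (∏ t ∈ Finset.range q, (ν - t)) / (Nat.factorial q)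

/-- `Υ(λ, m) = ½([m/2] + (1-(-1)^m) λ)`. -/
def Υ (l : ℂ) (m : ℕ) : ℂ := (1/2 : ℂ) * (((m / 2 : ℕ) : ℂ) + (1 - (-1 : ℂ)^m) * l)

/-- Index `[ (2(s-i)+1+(-1)^i)/4 ]`. -/
def Ξidx (s i : ℕ) : ℕ := if i % 2 = 0 then (2*(s-i)+2)/4 else (2*(s-i))/4

/-- `Ξ_{s,i}(λ)`. -/
def Ξ (s i : ℕ) (l : ℂ) : ℂ :=
  (Nat.choose (s/2) (i/2) : ℂ) * cchoose (2*l + (((s-1)/2 : ℕ) : ℂ)) (Ξidx s i)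

end SuperFn
namespace SuperFn

variable {n : ℕ}

/-- `|i| = i₁ + ... + i_n` for a multi-index. -/
def msum (i : Fin n → ℕ) : ℕ := ∑ t, i t

/-- `i + r·1_t`. -/
def addIdx (i : Fin n → ℕ) (t : Fin n) (r : ℕ) : Fin n → ℕ :=
  Function.update i t (i t + r)

/-- The finite set of multi-indices `i ∈ ℕⁿ` with `|i| ≤ m`. -/
def idxSet (n m : ℕ) : Finset (Fin n → ℕ) :=
  (Finset.range (m+1)).biUnion (fun ℓ => Finset.Nat.antidiagonalTuple n ℓ)

/-- The bracket `(r+i choose r+2)_s - ½(-1)^i (r+i choose r+1)_s + λ (r+i choose r)_s`. -/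
def Ccoef (r it : ℕ) (l : ℂ) : ℂ :=
  (sbinom (r+it) (r+2) : ℂ) - (1/2 : ℂ) * (-1 : ℂ)^it * (sbinom (r+it) (r+1) : ℂ)
    + l * (sbinom (r+it) r : ℂ)

/-- Coefficients `a_i^X` of `𝔏^{λ̲,μ}_{X_F}(A)` (Proposition 2.1 of the paper);
`m = 2k` and `δ = μ - Σλ`. -/
def actCoef (m : ℕ) (lam : Fin n → ℂ) (μ : ℂ) (F : SuperFn) (pF : Bool)
    (pa : (Fin n → ℕ) → Bool) (a : (Fin n → ℕ) → SuperFn) (i : Fin n → ℕ) : SuperFn :=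
  densL ((μ - ∑ t, lam t) - (msum i : ℂ)/2) F (a i)
  - ∑ t : Fin n, ∑ r ∈ Finset.Icc 1 (m - msum i),
      ((-1 : ℂ)^(r * (pn pF + pn (pa (addIdx i t r)) + ∑ j ∈ Finset.Iio t, i j))
          * Ccoef r (i t) (lam t)) •
        (Dbar^[r] (dx F) * a (addIdx i t r))

/-- The `n`-ary differential operator `A = Σ_{|i|≤m} a_i D̄^{i₁}⊗...⊗D̄^{i_n}`
applied to the tuple `φ` of densities with parities `pφ` (signs of the Koszul
rule included). -/
def opApply (m : ℕ) (a : (Fin n → ℕ) → SuperFn) (pφ : Fin n → Bool)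
    (φ : Fin n → SuperFn) : SuperFn :=
  ∑ i ∈ idxSet n m,
    ((-1 : ℂ)^(∑ p : Fin n, pn (pφ p) * (∑ q ∈ Finset.Ioi p, i q))) •
      (a i * ∏ t : Fin n, Dbar^[i t] (φ t))

/-- `φ(t) = Σ_{j≤t}(s_j - i_j)`. -/
def φf (i s : Fin n → ℕ) (t : Fin n) : ℕ := ∑ j ∈ Finset.Iic t, (s j - i j)

/-- `ψ(t) = Σ_{j<t} s_j (s_{j+1} - i_{j+1})`. -/
def ψf [NeZero n] (i s : Fin n → ℕ) (t : Fin n) : ℕ :=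
  ∑ j ∈ Finset.Iio t, s j * (s (j+1) - i (j+1))

/-- The explicit symbol-map coefficients `γ_i^s` of Theorem 3.2. -/
def γcoef [NeZero n] (lam : Fin n → ℂ) (δ : ℂ) (i s : Fin n → ℕ) : ℂ :=
  (-1 : ℂ)^((msum s - msum i + 1)/2) *
  (∏ t ∈ Finset.univ.filter (fun t : Fin n => t ≠ 0),
    ((-1 : ℂ)^(ψf i s t) * (sbinom (φf i s t) (s t - i t) : ℂ) * Ξ (s t) (i t) (lam t)) /
    ((Nat.choose (φf i s t / 2) ((s t - i t)/2) : ℂ) *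
     (Nat.choose ((φf i s t + 1)/2) ((s t - i t + 1)/2) : ℂ) *
     cchoose (2*δ - (msum i : ℂ) - 1) ((msum s - msum i + 1)/2))) *
  Ξ (s 0) (i 0) (lam 0)

/-- `γ_i^s`, extended by `0` unless `s ≥ i` componentwise. -/
def γfull [NeZero n] (lam : Fin n → ℂ) (δ : ℂ) (i s : Fin n → ℕ) : ℂ :=
  if ∀ t, i t ≤ s t then γcoef lam δ i s else 0

/-- The explicit quantization-map coefficients `β_i^s`. -/
def βcoef [NeZero n] (lam : Fin n → ℂ) (δ : ℂ) (i s : Fin n → ℕ) : ℂ :=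
  (-1 : ℂ)^((msum s - msum i - 1)/2) *
  (∏ t ∈ Finset.univ.filter (fun t : Fin n => t ≠ 0),
    ((-1 : ℂ)^(ψf i s t) * (sbinom (φf i s t) (s t - i t) : ℂ) * Ξ (s t) (i t) (lam t)) /
    ((Nat.choose (φf i s t / 2) ((s t - i t)/2) : ℂ) *
     (Nat.choose ((φf i s t + 1)/2) ((s t - i t + 1)/2) : ℂ) *
     cchoose (2*δ - (msum s : ℂ)) ((msum s - msum i + 1)/2))) *
  Ξ (s 0) (i 0) (lam 0)

/-- `β_i^s`, extended by `0` unless `s ≥ i` componentwise, with `β_i^i = γ_i^i`. -/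
def βfull [NeZero n] (lam : Fin n → ℂ) (δ : ℂ) (i s : Fin n → ℕ) : ℂ :=
  if ∀ t, i t ≤ s t then
    (if msum i < msum s then βcoef lam δ i s else γcoef lam δ i s)
  else 0

/-- A symbol (or quantization) map at the level of coefficients, with constant
coefficient matrix `c`: `a ↦ (i ↦ Σ_{|s| ≥ |i|} c_i^s D^{|s|-|i|}(a_s))`. -/
def symMap (m : ℕ) (c : (Fin n → ℕ) → (Fin n → ℕ) → ℂ)
    (a : (Fin n → ℕ) → SuperFn) (i : Fin n → ℕ) : SuperFn :=
  ∑ s ∈ (idxSet n m).filter (fun s => msum i ≤ msum s),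
    c i s • Dop^[msum s - msum i] (a s)

/-- A symbol map with (possibly non-constant) superfunction coefficients `ϖ_i^s(x,θ)`. -/
def symMapF (m : ℕ) (c : (Fin n → ℕ) → (Fin n → ℕ) → SuperFn)
    (a : (Fin n → ℕ) → SuperFn) (i : Fin n → ℕ) : SuperFn :=
  ∑ s ∈ (idxSet n m).filter (fun s => msum i ≤ msum s),
    c i s * Dop^[msum s - msum i] (a s)

/-- Non-resonance: `δ ∉ {1/2, 1, 3/2, ..., k}` (here `m = 2k`). -/
def NonResonant (δ : ℂ) (m : ℕ) : Prop := ∀ j ∈ Finset.Icc 1 m, δ ≠ (j : ℂ)/2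

end SuperFn

namespace Rec12
open SuperFn

variable {n : ℕ}

/-- The left-hand coefficient of the recursion. -/
def K (δ : ℂ) (p ℓ : ℕ) : ℂ :=
  (-1 : ℂ)^(ℓ - p) * ((((ℓ - p)/2 : ℕ) : ℂ) + (1 - (-1 : ℂ)^(ℓ - p)) * (δ - (ℓ : ℂ)/2))

lemma K_ne_zero {δ : ℂ} {m p ℓ : ℕ} (h : NonResonant δ m) (hpℓ : p < ℓ) (hℓ : ℓ ≤ m) :
    K δ p ℓ ≠ 0 := by
  have hd1 : 1 ≤ ℓ - p := by omega
  rcases Nat.even_or_odd (ℓ - p) with he | ho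
  · have h1 : ((-1 : ℂ))^(ℓ - p) = 1 := he.neg_one_pow
    have h2 : 2 ≤ ℓ - p := by
      rcases he with ⟨r, hr⟩; omega
    have h3 : 1 ≤ (ℓ - p)/2 := by omega
    simp only [K, h1]
    intro hc
    have : (((ℓ - p)/2 : ℕ) : ℂ) = 0 := by linear_combination hc
    rw [Nat.cast_eq_zero] at this
    omega
  · have h1 : ((-1 : ℂ))^(ℓ - p) = -1 := ho.neg_one_pow
    intro hc
    have hdl : (ℓ - p)/2 < ℓ := by omega
    have hj1 : 1 ≤ ℓ - (ℓ - p)/2 := by omega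
    have hj2 : ℓ - (ℓ - p)/2 ≤ m := by omega
    apply h (ℓ - (ℓ - p)/2) (Finset.mem_Icc.mpr ⟨hj1, hj2⟩)
    have hcast : ((ℓ - (ℓ - p)/2 : ℕ) : ℂ) = (ℓ : ℂ) - (((ℓ - p)/2 : ℕ) : ℂ) := by
      push_cast [Nat.cast_sub (le_of_lt hdl)]; ring
    simp only [K, h1] at hc
    rw [hcast]
    have hc' : (((ℓ - p)/2 : ℕ) : ℂ) + 2 * (δ - (ℓ : ℂ)/2) = 0 := by
      linear_combination -hc
    linear_combination hc'/2

/-- The coefficient of `ϖ i (s - 1_j)` in the recursion. -/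
def coefj (lam : Fin n → ℂ) (s : Fin n → ℕ) (j : Fin n) : ℂ :=
  ((-1 : ℂ)^(∑ t ∈ Finset.Iio j, s t)) *
    ((((s j)/2 : ℕ) : ℂ) + (1 - (-1 : ℂ)^(s j)) * lam j)

lemma coefj_zero (lam : Fin n → ℂ) {s : Fin n → ℕ} {j : Fin n} (h : s j = 0) :
    coefj lam s j = 0 := by
  simp [coefj, h]

lemma update_self (s : Fin n → ℕ) (j : Fin n) (h : s j = 0) :
    Function.update s j (s j - 1) = s := by
  have h' : s j - 1 = s j := by omega
  rw [h', Function.update_eq_self]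

lemma msum_update (s : Fin n → ℕ) (j : Fin n) (h : 1 ≤ s j) :
    msum (Function.update s j (s j - 1)) + 1 = msum s := by
  unfold msum
  rw [Finset.sum_update_of_mem (Finset.mem_univ j)]
  have : ∑ t, s t = s j + ∑ t ∈ Finset.univ \ {j}, s t := by
    rw [Finset.sum_eq_add_sum_sdiff_singleton_of_mem (Finset.mem_univ j)]
  omega

/-- The solution, built by recursion on a bound `ℓ` for `msum s`. -/
def sol (m : ℕ) (lam : Fin n → ℂ) (δ : ℂ)
    (c : (Fin n → ℕ) → (Fin n → ℕ) → ℂ) : ℕ → (Fin n → ℕ) → (Fin n → ℕ) → ℂ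
  | 0, i, s => if msum i = msum s ∧ msum s ≤ m then c i s else 0
  | (ℓ+1), i, s =>
      if msum i ≤ msum s ∧ msum s ≤ m then
        if msum i = msum s then c i s
        else (K δ (msum i) (msum s))⁻¹ *
          ∑ j : Fin n, coefj lam s j *
            sol m lam δ c ℓ i (Function.update s j (s j - 1))
      else 0

lemma sol_succ (m : ℕ) (lam : Fin n → ℂ) (δ : ℂ)
    (c : (Fin n → ℕ) → (Fin n → ℕ) → ℂ) :
    ∀ ℓ (i s : Fin n → ℕ), msum s ≤ ℓ →
      sol m lam δ c (ℓ+1) i s = sol m lam δ c ℓ i s := by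
  intro ℓ
  induction ℓ with
  | zero =>
    intro i s hs
    have hs0 : msum s = 0 := by omega
    simp only [sol]
    by_cases h1 : msum i ≤ msum s ∧ msum s ≤ m
    · rw [if_pos h1,
        if_pos (show msum i = msum s ∧ msum s ≤ m from ⟨by omega, h1.2⟩),
        if_pos (show msum i = msum s by omega)]
    · rw [if_neg h1,
        if_neg (show ¬(msum i = msum s ∧ msum s ≤ m) from
          fun hh => h1 ⟨le_of_eq hh.1, hh.2⟩)]
  | succ ℓ ih =>
    intro i s hs
    show sol m lam δ c (ℓ+2) i s = sol m lam δ c (ℓ+1) i s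
    simp only [sol]
    by_cases h1 : msum i ≤ msum s ∧ msum s ≤ m
    · rw [if_pos h1, if_pos h1]
      by_cases h2 : msum i = msum s
      · rw [if_pos h2, if_pos h2]
      · rw [if_neg h2, if_neg h2]
        congr 1
        apply Finset.sum_congr rfl
        intro j _
        by_cases hj : s j = 0
        · rw [coefj_zero lam hj]; ring
        · congr 1
          apply ih
          have := msum_update s j (by omega)
          omega
    · rw [if_neg h1, if_neg h1]

lemma sol_ge (m : ℕ) (lam : Fin n → ℂ) (δ : ℂ)
    (c : (Fin n → ℕ) → (Fin n → ℕ) → ℂ)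
    (ℓ : ℕ) (i s : Fin n → ℕ) (hs : msum s ≤ ℓ) :
    sol m lam δ c ℓ i s = sol m lam δ c (msum s) i s := by
  induction ℓ with
  | zero => have : msum s = 0 := by omega
            rw [this]
  | succ ℓ ih =>
    rcases Nat.lt_or_ge (msum s) (ℓ+1) with h | h
    · rw [sol_succ m lam δ c ℓ i s (by omega), ih (by omega)]
    · have : msum s = ℓ + 1 := by omega
      rw [this]

/-- The solution. -/
def W (m : ℕ) (lam : Fin n → ℂ) (δ : ℂ)
    (c : (Fin n → ℕ) → (Fin n → ℕ) → ℂ) (i s : Fin n → ℕ) : ℂ :=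
  sol m lam δ c (msum s) i s

lemma W_zero (m : ℕ) (lam : Fin n → ℂ) (δ : ℂ)
    (c : (Fin n → ℕ) → (Fin n → ℕ) → ℂ) (i s : Fin n → ℕ)
    (h : ¬(msum i ≤ msum s ∧ msum s ≤ m)) : W m lam δ c i s = 0 := by
  simp only [W]
  rcases Nat.eq_zero_or_pos (msum s) with h0 | h0
  · rw [h0]
    simp only [sol]
    rw [if_neg]
    intro ⟨a, b⟩
    exact h ⟨by omega, b⟩
  · obtain ⟨ℓ, hℓ⟩ : ∃ ℓ, msum s = ℓ + 1 := ⟨msum s - 1, by omega⟩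
    rw [hℓ]
    simp only [sol]
    rw [if_neg h]

lemma W_diag (m : ℕ) (lam : Fin n → ℂ) (δ : ℂ)
    (c : (Fin n → ℕ) → (Fin n → ℕ) → ℂ) (i s : Fin n → ℕ)
    (h : msum i = msum s) (hm : msum s ≤ m) : W m lam δ c i s = c i s := by
  simp only [W]
  rcases Nat.eq_zero_or_pos (msum s) with h0 | h0
  · rw [h0]
    simp only [sol]
    rw [if_pos ⟨h, hm⟩]
  · obtain ⟨ℓ, hℓ⟩ : ∃ ℓ, msum s = ℓ + 1 := ⟨msum s - 1, by omega⟩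
    rw [hℓ]
    simp only [sol]
    rw [if_pos ⟨le_of_eq h, hm⟩, if_pos h]

lemma W_rec (m : ℕ) (lam : Fin n → ℂ) (δ : ℂ)
    (c : (Fin n → ℕ) → (Fin n → ℕ) → ℂ)
    (h : NonResonant δ m) (i s : Fin n → ℕ)
    (hlt : msum i < msum s) (hm : msum s ≤ m) :
    K δ (msum i) (msum s) * W m lam δ c i s
      = ∑ j : Fin n, coefj lam s j * W m lam δ c i (Function.update s j (s j - 1)) := by
  obtain ⟨ℓ, hℓ⟩ : ∃ ℓ, msum s = ℓ + 1 := ⟨msum s - 1, by omega⟩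
  have hW : W m lam δ c i s = sol m lam δ c (ℓ+1) i s := by
    simp only [W, hℓ]
  rw [hW]
  simp only [sol]
  rw [if_pos ⟨le_of_lt hlt, hm⟩, if_neg (Nat.ne_of_lt hlt)]
  rw [← mul_assoc, mul_inv_cancel₀ (K_ne_zero h hlt hm), one_mul]
  apply Finset.sum_congr rfl
  intro j _
  by_cases hj : s j = 0
  · rw [coefj_zero lam hj]; ring
  · have hms : msum (Function.update s j (s j - 1)) = ℓ := by
      have := msum_update s j (by omega)
      omega
    congr 1
    simp only [W, hms]

end Rec12

open SuperFn in
/-- for non-resonant `δ` (i.e. `δ ∉ {1/2, 1, ..., k}`, `m = 2k`), the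
equivariance recursion, together with prescribed values `ϖ_i^s` for `|s| = |i|`,
admits a unique solution `(ϖ_i^s)` (normalized to vanish outside
`|i| ≤ |s| ≤ 2k`). -/
theorem recursion_unique_solution (n m : ℕ) [NeZero n]
    (lam : Fin n → ℂ) (δ : ℂ) (hδ : NonResonant δ m)
    (c : (Fin n → ℕ) → (Fin n → ℕ) → ℂ) :
    ∃! ϖ : (Fin n → ℕ) → (Fin n → ℕ) → ℂ,
      (∀ i s, ¬(msum i ≤ msum s ∧ msum s ≤ m) → ϖ i s = 0) ∧
      (∀ i s, msum i = msum s → msum s ≤ m → ϖ i s = c i s) ∧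
      (∀ i s : Fin n → ℕ, msum i < msum s → msum s ≤ m →
        ((-1 : ℂ)^(msum s - msum i)) *
            ((((msum s - msum i)/2 : ℕ) : ℂ)
              + (1 - (-1 : ℂ)^(msum s - msum i)) * (δ - (msum s : ℂ)/2)) * ϖ i s
          = ∑ j : Fin n,
              ((-1 : ℂ)^(∑ t ∈ Finset.Iio j, s t)) *
                ((((s j)/2 : ℕ) : ℂ) + (1 - (-1 : ℂ)^(s j)) * lam j) *
                  ϖ i (Function.update s j (s j - 1))) := by
  refine ⟨Rec12.W m lam δ c, ⟨?_, ?_, ?_⟩, ?_⟩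
  · intro i s h
    exact Rec12.W_zero m lam δ c i s h
  · intro i s h hm
    exact Rec12.W_diag m lam δ c i s h hm
  · intro i s hlt hm
    have := Rec12.W_rec m lam δ c hδ i s hlt hm
    simpa only [Rec12.K, Rec12.coefj, mul_assoc] using this
  · intro y ⟨y1, y2, y3⟩
    have key : ∀ L (s : Fin n → ℕ), msum s = L → ∀ i, y i s = Rec12.W m lam δ c i s := by
      intro L
      induction L using Nat.strong_induction_on with
      | _ L ih =>
        intro s hs i
        by_cases h1 : msum i ≤ msum s ∧ msum s ≤ m
        · by_cases h2 : msum i = msum s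
          · rw [y2 i s h2 h1.2, Rec12.W_diag m lam δ c i s h2 h1.2]
          · have hlt : msum i < msum s := lt_of_le_of_ne h1.1 h2
            have e1 : Rec12.K δ (msum i) (msum s) * y i s
                = ∑ j : Fin n, Rec12.coefj lam s j *
                    y i (Function.update s j (s j - 1)) := by
              simpa only [Rec12.K, Rec12.coefj, mul_assoc] using y3 i s hlt h1.2
            have e2 := Rec12.W_rec m lam δ c hδ i s hlt h1.2
            have e3 : ∑ j : Fin n, Rec12.coefj lam s j *
                  y i (Function.update s j (s j - 1))
                = ∑ j : Fin n, Rec12.coefj lam s j *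
                    Rec12.W m lam δ c i (Function.update s j (s j - 1)) := by
              apply Finset.sum_congr rfl
              intro j _
              by_cases hj : s j = 0
              · rw [Rec12.coefj_zero lam hj]; ring
              · have hms := Rec12.msum_update s j (by omega)
                rw [ih (msum (Function.update s j (s j - 1))) (by omega) _ rfl i]
            exact mul_left_cancel₀ (Rec12.K_ne_zero hδ hlt h1.2)
              (by rw [e1, e3, ← e2])
        · rw [y1 i s h1, Rec12.W_zero m lam δ c i s h1]
    funext i s
    exact key (msum s) s rfl i
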